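/- Let ≺ be a monomial order on R^d, let U ⊆ R^d be a submodule with Gröbner basis G, and let H = {h_1,…,h_r} ⊆ R^d∖{0} be a finite set with NF(h_i, U) = h_i for all i. Then for every f ∈ R^d there exist an element p ∈ R^d and polynomials q_1,…,q_r ∈ R such that f − p − Σ_{i=1}^r q_i h_i ∈ U, no module monomial in the support of p is divisible by a leading monomial of an element of G or of H, and lm(q_i h_i) ⪯ lm(f) for every i with q_i ≠ 0. -/

import Mathlib

attribute [local instance] Classical.propDecidable

noncomputable section

/-- Module monomial index: an exponent vector together with a component index. -/
abbrev ModMon (n d : ℕ) := (Fin n →₀ ℕ) × Fin d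

/-- The free module `R^d` over `R = k[X_1, …, X_n]`. -/
abbrev FreeMod (k : Type*) [Field k] (n d : ℕ) := Fin d → MvPolynomial (Fin n) k

variable {k : Type*} [Field k] {n d : ℕ}

/-- The module monomial `X^α e_i` as an element of `R^d`. -/
def mmVec (m : ModMon n d) : FreeMod k n d :=
  Pi.single m.2 (MvPolynomial.monomial m.1 (1 : k))

/-- The support of `f ∈ R^d` as a finite set of module monomials. -/
def suppF (f : FreeMod k n d) : Finset (ModMon n d) :=
  (Finset.univ : Finset (Fin d)).biUnion fun i =>
    ((f i).support.image fun a => ((a, i) : ModMon n d))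

/-- A monomial order on `R^d`: a well-founded total order on module monomials such that
`e_i ⪯ X^α e_i` and which is compatible with multiplication by monomials. -/
structure ModMonOrder (n d : ℕ) where
  toOrd : LinearOrder (ModMon n d)
  wf : WellFounded toOrd.lt
  base_le : ∀ (i : Fin d) (a : Fin n →₀ ℕ), toOrd.le (0, i) (a, i)
  add_le : ∀ (a b c : Fin n →₀ ℕ) (i j : Fin d),
    toOrd.le (b, i) (c, j) → toOrd.le (a + b, i) (a + c, j)

namespace ModMonOrder

variable (ord : ModMonOrder n d)

/-- The leading monomial of `f` (`⊥` if `f = 0`). -/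
def lmo (f : FreeMod k n d) : WithBot (ModMon n d) :=
  letI := ord.toOrd
  (suppF f).max

/-- The order on leading monomials, extended to `WithBot` (with `⊥` smallest). -/
def leB (x y : WithBot (ModMon n d)) : Prop :=
  WithBot.recBotCoe True
    (fun a => WithBot.recBotCoe False (fun b => ord.toOrd.le a b) y) x

/-- The leading coefficient of `f` (`0` if `f = 0`). -/
def lc (f : FreeMod k n d) : k :=
  WithBot.recBotCoe 0 (fun m => (f m.2).coeff m.1) (ord.lmo f)

/-- The leading monomial of `f`, as an element of `R^d` (`0` if `f = 0`). -/
def lmVec (f : FreeMod k n d) : FreeMod k n d :=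
  WithBot.recBotCoe 0 (fun m => mmVec m) (ord.lmo f)

/-- `lm(W)`: the submodule generated by the leading monomials of nonzero elements of `W`. -/
def lmSub (W : Submodule (MvPolynomial (Fin n) k) (FreeMod k n d)) :
    Submodule (MvPolynomial (Fin n) k) (FreeMod k n d) :=
  Submodule.span (MvPolynomial (Fin n) k) {v | ∃ f ∈ W, f ≠ 0 ∧ v = ord.lmVec f}

end ModMonOrder

/-- Divisibility in `R^d`: `u` divides `v` iff `v = p • u` for some polynomial `p`. -/
def dvdV (u v : FreeMod k n d) : Prop := ∃ p : MvPolynomial (Fin n) k, v = p • u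

/-- `G` is a Gröbner basis of the submodule `W ⊆ R^d`. -/
def IsGB (ord : ModMonOrder n d) (W : Submodule (MvPolynomial (Fin n) k) (FreeMod k n d))
    (G : Finset (FreeMod k n d)) : Prop :=
  Submodule.span (MvPolynomial (Fin n) k) (G : Set (FreeMod k n d)) = W ∧
  Submodule.span (MvPolynomial (Fin n) k) (ord.lmVec '' (G : Set (FreeMod k n d))) = ord.lmSub W

/-- `G` is the reduced Gröbner basis of `W ⊆ R^d`. -/
def IsRedGB (ord : ModMonOrder n d) (W : Submodule (MvPolynomial (Fin n) k) (FreeMod k n d))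
    (G : Finset (FreeMod k n d)) : Prop :=
  IsGB ord W G ∧
  (∀ g ∈ G, ∀ g' ∈ G, g ≠ g' → ¬ dvdV (ord.lmVec g) (ord.lmVec g')) ∧
  ∀ g ∈ G, ord.lc g = 1 ∧ ∀ m ∈ suppF (g - ord.lmVec g), mmVec m ∉ ord.lmSub W

/-- `p` is a normal form of `f` modulo `U`: `f - p ∈ U` and `p` is supported on
module monomials outside `lm(U)`. -/
def IsNF (ord : ModMonOrder n d) (U : Submodule (MvPolynomial (Fin n) k) (FreeMod k n d))
    (f p : FreeMod k n d) : Prop :=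
  f - p ∈ U ∧ ∀ m ∈ suppF p, mmVec m ∉ ord.lmSub U

/-- `H` is a Gröbner basis of `V` relative to `U`. -/
def IsRelGB (ord : ModMonOrder n d) (U V : Submodule (MvPolynomial (Fin n) k) (FreeMod k n d))
    (H : Finset (FreeMod k n d)) : Prop :=
  (H : Set (FreeMod k n d)) ⊆ (V : Set (FreeMod k n d)) \ (U : Set (FreeMod k n d)) ∧
  (∀ h ∈ H, ∀ m ∈ suppF h, mmVec m ∉ ord.lmSub U) ∧
  Submodule.span (MvPolynomial (Fin n) k) (ord.lmVec '' (H : Set (FreeMod k n d))) ⊔ ord.lmSub U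
    = ord.lmSub V

/-- `H` is a minimal Gröbner basis of `V` relative to `U`. -/
def IsMinRelGB (ord : ModMonOrder n d) (U V : Submodule (MvPolynomial (Fin n) k) (FreeMod k n d))
    (H : Finset (FreeMod k n d)) : Prop :=
  IsRelGB ord U V H ∧
  ∀ h ∈ H, ∀ h' ∈ H, h ≠ h' → ¬ dvdV (ord.lmVec h) (ord.lmVec h')

/-- `H` is the reduced Gröbner basis of `V` relative to `U`. -/
def IsRedRelGB (ord : ModMonOrder n d) (U V : Submodule (MvPolynomial (Fin n) k) (FreeMod k n d))
    (H : Finset (FreeMod k n d)) : Prop :=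
  IsMinRelGB ord U V H ∧
  ∀ h ∈ H, ord.lc h = 1 ∧ ∀ m ∈ suppF (h - ord.lmVec h), mmVec m ∉ ord.lmSub V

end

/-!
This is division with remainder in which multiples of elements of `U` may be subtracted without
being recorded. While `f ≠ 0`, its leading term is cancelled by a monomial multiple of some
`u ∈ U` if `lm f ∈ lm(U)`, otherwise of some `h i` with `lm (h i) ∣ lm f` (and then recorded in
`q i`), and otherwise it is moved to the remainder. Each step strictly lowers `lm f`, so the
well-foundedness of `≺` ends the process, and every recorded multiple of `h i` has leading
monomial at most the original `lm f`. A remainder monomial outside `lm(U)` is not divisible by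
`lm g` for `g ∈ G ⊆ U`.
-/

open MvPolynomial

theorem Finset.max_eq_coe_iff {α : Type*} [LinearOrder α] {s : Finset α} {a : α} :
    s.max = ↑a ↔ a ∈ s ∧ ∀ b ∈ s, b ≤ a :=
  ⟨fun h => ⟨Finset.mem_of_max h, fun _ hb => Finset.le_max_of_eq hb h⟩,
    fun ⟨ha, hle⟩ => le_antisymm (Finset.max_le fun b hb => WithBot.coe_le_coe.mpr (hle b hb))
      (Finset.le_max ha)⟩

section Support

variable {k : Type*} [Field k] {n d : ℕ}

theorem mem_suppF {f : FreeMod k n d} {m : ModMon n d} :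
    m ∈ suppF f ↔ (f m.2).coeff m.1 ≠ 0 := by
  obtain ⟨a, i⟩ := m
  simp only [suppF, Finset.mem_biUnion, Finset.mem_univ, true_and, Finset.mem_image,
    MvPolynomial.mem_support_iff, Prod.mk.injEq]
  exact ⟨fun ⟨_, _, h, ha, hi⟩ => ha ▸ hi ▸ h, fun h => ⟨i, a, h, rfl, rfl⟩⟩

theorem suppF_eq_empty {f : FreeMod k n d} : suppF f = ∅ ↔ f = 0 := by
  simp only [Finset.eq_empty_iff_forall_notMem, mem_suppF, not_not]
  refine ⟨fun h => funext fun i => MvPolynomial.ext _ _ fun a => h (a, i), ?_⟩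
  rintro rfl m
  rfl

theorem suppF_mmVec (m : ModMon n d) : suppF (mmVec m : FreeMod k n d) = {m} := by
  ext ⟨a, i⟩
  obtain ⟨b, j⟩ := m
  rcases eq_or_ne i j with rfl | hij
  · simp [mem_suppF, mmVec, coeff_monomial, eq_comm]
  · simp [mem_suppF, mmVec, hij]

theorem suppF_add_subset (f g : FreeMod k n d) : suppF (f + g) ⊆ suppF f ∪ suppF g := by
  intro m
  simp only [Finset.mem_union, mem_suppF, Pi.add_apply, coeff_add]
  contrapose!
  rintro ⟨hf, hg⟩
  rw [hf, hg, add_zero]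

theorem suppF_sub_subset (f g : FreeMod k n d) : suppF (f - g) ⊆ suppF f ∪ suppF g := by
  rw [sub_eq_add_neg]
  refine (suppF_add_subset f (-g)).trans (Finset.union_subset_union le_rfl fun m => ?_)
  simp [mem_suppF]

theorem exists_eq_add_of_mem_suppF_smul {p : MvPolynomial (Fin n) k} {f : FreeMod k n d}
    {m : ModMon n d} (hm : m ∈ suppF (p • f)) : ∃ γ, ∃ m' ∈ suppF f, m = (γ + m'.1, m'.2) := by
  have hmul : m.1 ∈ (p * f m.2).support := MvPolynomial.mem_support_iff.mpr (mem_suppF.mp hm)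
  obtain ⟨γ, -, b, hb, hγb⟩ := Finset.mem_add.mp (support_mul p (f m.2) hmul)
  exact ⟨γ, (b, m.2), mem_suppF.mpr (MvPolynomial.mem_support_iff.mp hb), Prod.ext hγb.symm rfl⟩

theorem coeff_monomial_smul_apply (β : Fin n →₀ ℕ) (c : k) (f : FreeMod k n d)
    (a : Fin n →₀ ℕ) (i : Fin d) :
    ((monomial β c • f) i).coeff (β + a) = c * (f i).coeff a := by
  simp [coeff_monomial_mul]

theorem suppF_monomial_smul_subset (β : Fin n →₀ ℕ) (c : k) (f : FreeMod k n d) :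
    suppF (monomial β c • f) ⊆ (suppF f).image fun m => ((β + m.1, m.2) : ModMon n d) := by
  intro m hm
  have hcoeff := mem_suppF.mp hm
  simp only [Pi.smul_apply, smul_eq_mul, coeff_monomial_mul'] at hcoeff
  split_ifs at hcoeff with hβ
  · exact Finset.mem_image.mpr ⟨(m.1 - β, m.2), mem_suppF.mpr (right_ne_zero_of_mul hcoeff),
      Prod.ext (add_tsub_cancel_of_le hβ) rfl⟩
  · exact absurd rfl hcoeff

theorem exists_eq_add_of_dvdV_mmVec {m m' : ModMon n d}
    (hd : dvdV (mmVec m' : FreeMod k n d) (mmVec m)) : ∃ β, m = (β + m'.1, m'.2) := by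
  obtain ⟨p, hp⟩ := hd
  have hm : m ∈ suppF (p • (mmVec m' : FreeMod k n d)) := by
    rw [← hp, suppF_mmVec]
    exact Finset.mem_singleton_self m
  obtain ⟨β, m'', hm'', rfl⟩ := exists_eq_add_of_mem_suppF_smul hm
  rw [suppF_mmVec, Finset.mem_singleton] at hm''
  exact ⟨β, hm'' ▸ rfl⟩

end Support

namespace ModMonOrder

variable {k : Type*} [Field k] {n d : ℕ} (ord : ModMonOrder n d)

theorem leB_trans {x y z : WithBot (ModMon n d)} (hxy : ord.leB x y) (hyz : ord.leB y z) :
    ord.leB x z := by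
  cases x with
  | bot => trivial
  | coe a =>
    cases y with
    | bot => exact hxy.elim
    | coe b =>
      cases z with
      | bot => exact hyz.elim
      | coe c => exact ord.toOrd.le_trans a b c hxy hyz

-- `ModMon n d` is a product and carries the componentwise order instances, so the order
-- `ord.toOrd` is passed explicitly wherever the library's order lemmas are used.
theorem wellFounded_leB_ne :
    WellFounded fun x y : WithBot (ModMon n d) => ord.leB x y ∧ x ≠ y := by
  refine Subrelation.wf (fun {x y} hxy => ?_)
    (@WithBot.instWellFoundedLT _ ord.toOrd.toLT ⟨ord.wf⟩).wf
  cases y with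
  | bot => cases x <;> first | exact hxy.1.elim | exact absurd rfl hxy.2
  | coe b =>
    cases x with
    | bot => exact @WithBot.bot_lt_coe _ ord.toOrd.toLT b
    | coe a =>
      exact (@WithBot.coe_lt_coe _ a b ord.toOrd.toLT).mpr
        (@lt_of_le_of_ne _ ord.toOrd.toPartialOrder a b hxy.1 fun h => hxy.2 (congrArg _ h))

theorem lmo_eq_bot_iff {f : FreeMod k n d} : ord.lmo f = ⊥ ↔ f = 0 :=
  (@Finset.max_eq_bot _ ord.toOrd _).trans suppF_eq_empty

theorem lmo_eq_coe_iff {f : FreeMod k n d} {m : ModMon n d} :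
    ord.lmo f = ↑m ↔ m ∈ suppF f ∧ ∀ x ∈ suppF f, ord.leB ↑x ↑m :=
  @Finset.max_eq_coe_iff _ ord.toOrd _ _

theorem exists_lmo_eq_coe {f : FreeMod k n d} (hf : f ≠ 0) : ∃ m : ModMon n d, ord.lmo f = ↑m := by
  cases h : ord.lmo f with
  | bot => exact absurd ((lmo_eq_bot_iff ord).mp h) hf
  | coe m => exact ⟨m, rfl⟩

theorem mem_suppF_of_lmo_eq {f : FreeMod k n d} {m : ModMon n d} (h : ord.lmo f = ↑m) :
    m ∈ suppF f :=
  ((lmo_eq_coe_iff ord).mp h).1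

theorem lmo_leB_iff {f : FreeMod k n d} {b : WithBot (ModMon n d)} :
    ord.leB (ord.lmo f) b ↔ ∀ m ∈ suppF f, ord.leB ↑m b := by
  cases hf : ord.lmo f with
  | bot => simp [(lmo_eq_bot_iff ord).mp hf, suppF_eq_empty.mpr, leB]
  | coe a =>
    obtain ⟨ha, hle⟩ := (lmo_eq_coe_iff ord).mp hf
    exact ⟨fun hab m hm => ord.leB_trans (hle m hm) hab, fun h => h a ha⟩

theorem lmo_add_leB {f g : FreeMod k n d} {b : WithBot (ModMon n d)}
    (hf : ord.leB (ord.lmo f) b) (hg : ord.leB (ord.lmo g) b) : ord.leB (ord.lmo (f + g)) b := by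
  rw [lmo_leB_iff] at hf hg ⊢
  intro m hm
  rcases Finset.mem_union.mp (suppF_add_subset f g hm) with hm | hm
  exacts [hf m hm, hg m hm]

theorem lmo_smul_zero_leB (f : FreeMod k n d) (b : WithBot (ModMon n d)) :
    ord.leB (ord.lmo ((0 : MvPolynomial (Fin n) k) • f)) b := by
  rw [zero_smul, (lmo_eq_bot_iff ord).mpr rfl]
  trivial

theorem lmo_monomial_smul {β : Fin n →₀ ℕ} {c : k} {f : FreeMod k n d} {m : ModMon n d}
    (hc : c ≠ 0) (hm : ord.lmo f = ↑m) :
    ord.lmo (monomial β c • f) = ↑((β + m.1, m.2) : ModMon n d) := by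
  obtain ⟨hmf, hle⟩ := (lmo_eq_coe_iff ord).mp hm
  refine (lmo_eq_coe_iff ord).mpr ⟨?_, fun x hx => ?_⟩
  · rw [mem_suppF, coeff_monomial_smul_apply]
    exact mul_ne_zero hc (mem_suppF.mp hmf)
  · obtain ⟨m', hm', rfl⟩ := Finset.mem_image.mp (suppF_monomial_smul_subset β c f hx)
    exact ord.add_le β m'.1 m.1 m'.2 m.2 (hle m' hm')

theorem lmo_sub_lt {f g : FreeMod k n d} {m : ModMon n d} (hf : ord.lmo f = ↑m)
    (hg : ord.lmo g = ↑m) (hfg : (f m.2).coeff m.1 = (g m.2).coeff m.1) :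
    ord.leB (ord.lmo (f - g)) ↑m ∧ ord.lmo (f - g) ≠ ↑m := by
  refine ⟨(lmo_leB_iff ord).mpr fun x hx => ?_, fun h => ?_⟩
  · rcases Finset.mem_union.mp (suppF_sub_subset f g hx) with hx | hx
    exacts [((lmo_eq_coe_iff ord).mp hf).2 x hx, ((lmo_eq_coe_iff ord).mp hg).2 x hx]
  · have hm := mem_suppF.mp (ord.mem_suppF_of_lmo_eq h)
    simp only [Pi.sub_apply, coeff_sub, hfg, sub_self] at hm
    exact hm rfl

theorem exists_lmo_sub_monomial_smul_lt {f w : FreeMod k n d} {mw : ModMon n d}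
    {β : Fin n →₀ ℕ} (hf : ord.lmo f = ↑((β + mw.1, mw.2) : ModMon n d)) (hw : ord.lmo w = ↑mw) :
    ∃ c : k, ord.lmo (monomial β c • w) = ↑((β + mw.1, mw.2) : ModMon n d) ∧
      ord.leB (ord.lmo (f - monomial β c • w)) ↑((β + mw.1, mw.2) : ModMon n d) ∧
      ord.lmo (f - monomial β c • w) ≠ ↑((β + mw.1, mw.2) : ModMon n d) := by
  have hw0 : (w mw.2).coeff mw.1 ≠ 0 := mem_suppF.mp (ord.mem_suppF_of_lmo_eq hw)
  have hf0 : (f mw.2).coeff (β + mw.1) ≠ 0 := mem_suppF.mp (ord.mem_suppF_of_lmo_eq hf)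
  have hlm := ord.lmo_monomial_smul (β := β) (div_ne_zero hf0 hw0) hw
  refine ⟨_, hlm, ord.lmo_sub_lt hf hlm ?_⟩
  rw [coeff_monomial_smul_apply, div_mul_cancel₀ _ hw0]

theorem lmVec_eq {f : FreeMod k n d} {m : ModMon n d} (h : ord.lmo f = ↑m) :
    ord.lmVec f = mmVec m := by
  rw [lmVec, h]
  rfl

theorem exists_lmo_eq_of_dvdV_lmVec {u : FreeMod k n d} {m : ModMon n d}
    (hd : dvdV (ord.lmVec u) (mmVec m)) :
    ∃ (mu : ModMon n d) (β : Fin n →₀ ℕ), ord.lmo u = ↑mu ∧ m = (β + mu.1, mu.2) := by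
  cases hu : ord.lmo u with
  | bot =>
    obtain ⟨p, hp⟩ := hd
    rw [lmVec, hu] at hp
    exact absurd (hp.trans (smul_zero p)) (by simp [← suppF_eq_empty, suppF_mmVec])
  | coe mu =>
    rw [ord.lmVec_eq hu] at hd
    exact ⟨mu, (exists_eq_add_of_dvdV_mmVec hd).imp fun _ h => ⟨rfl, h⟩⟩

theorem lmVec_mem_lmSub {W : Submodule (MvPolynomial (Fin n) k) (FreeMod k n d)}
    {u : FreeMod k n d} (hu : u ∈ W) : ord.lmVec u ∈ ord.lmSub W := by
  rcases eq_or_ne u 0 with rfl | hu0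
  · rw [lmVec, (lmo_eq_bot_iff ord).mpr rfl]
    exact zero_mem _
  · exact Submodule.subset_span ⟨u, hu, hu0, rfl⟩

theorem exists_lmo_dvd_of_mem_lmSub {W : Submodule (MvPolynomial (Fin n) k) (FreeMod k n d)}
    {v : FreeMod k n d} (hv : v ∈ ord.lmSub W) {m : ModMon n d} (hm : m ∈ suppF v) :
    ∃ u ∈ W, ∃ (mu : ModMon n d) (β : Fin n →₀ ℕ), ord.lmo u = ↑mu ∧ m = (β + mu.1, mu.2) := by
  induction hv using Submodule.span_induction generalizing m with
  | mem x hx =>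
    obtain ⟨u, hu, hu0, rfl⟩ := hx
    obtain ⟨mu, hmu⟩ := ord.exists_lmo_eq_coe hu0
    rw [ord.lmVec_eq hmu, suppF_mmVec, Finset.mem_singleton] at hm
    exact ⟨u, hu, mu, 0, hmu, by rw [hm, zero_add]⟩
  | zero => simp [suppF_eq_empty.mpr rfl] at hm
  | add x y _ _ ihx ihy =>
    rcases Finset.mem_union.mp (suppF_add_subset x y hm) with hm | hm
    exacts [ihx hm, ihy hm]
  | smul a x _ ih =>
    obtain ⟨γ, m', hm', rfl⟩ := exists_eq_add_of_mem_suppF_smul hm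
    obtain ⟨u, hu, mu, β, hmu, rfl⟩ := ih hm'
    exact ⟨u, hu, mu, γ + β, hmu, by rw [add_assoc]⟩

variable {r : ℕ} (U : Submodule (MvPolynomial (Fin n) k) (FreeMod k n d))
  (h : Fin r → FreeMod k n d)

structure IsDivision (b : WithBot (ModMon n d)) (f p : FreeMod k n d)
    (q : Fin r → MvPolynomial (Fin n) k) : Prop where
  sub_mem : f - p - ∑ i, q i • h i ∈ U
  remainder : ∀ m ∈ suppF p, mmVec m ∉ ord.lmSub U ∧ ∀ i, ¬ dvdV (ord.lmVec (h i)) (mmVec m)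
  quotient_le : ∀ i, ord.leB (ord.lmo (q i • h i)) b

namespace IsDivision

variable {ord U h} {b : WithBot (ModMon n d)} {f p : FreeMod k n d}
  {q : Fin r → MvPolynomial (Fin n) k}

theorem zero : ord.IsDivision U h b 0 0 0 where
  sub_mem := by simp
  remainder m hm := by simp [suppF_eq_empty.mpr rfl] at hm
  quotient_le i := ord.lmo_smul_zero_leB (h i) b

theorem mono {b' : WithBot (ModMon n d)} (hd : ord.IsDivision U h b f p q)
    (hb : ord.leB b b') : ord.IsDivision U h b' f p q :=
  ⟨hd.sub_mem, hd.remainder, fun i => ord.leB_trans (hd.quotient_le i) hb⟩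

theorem of_sub_mem {u : FreeMod k n d} (hu : u ∈ U) (hd : ord.IsDivision U h b (f - u) p q) :
    ord.IsDivision U h b f p q := by
  refine ⟨?_, hd.remainder, hd.quotient_le⟩
  convert U.add_mem hd.sub_mem hu using 1
  abel

theorem add_single {i₀ : Fin r} {c : MvPolynomial (Fin n) k}
    (hc : ord.leB (ord.lmo (c • h i₀)) b) (hd : ord.IsDivision U h b (f - c • h i₀) p q) :
    ord.IsDivision U h b f p (q + Pi.single i₀ c) := by
  have hsum : ∑ i, (q + Pi.single i₀ c : Fin r → MvPolynomial (Fin n) k) i • h i =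
      ∑ i, q i • h i + c • h i₀ := by
    simp [add_smul, Finset.sum_add_distrib, Pi.single_apply, ite_smul]
  refine ⟨?_, hd.remainder, fun i => ?_⟩
  · convert hd.sub_mem using 1
    rw [hsum]
    abel
  · rw [Pi.add_apply, add_smul]
    refine ord.lmo_add_leB (hd.quotient_le i) ?_
    rcases eq_or_ne i i₀ with rfl | hi
    · rwa [Pi.single_eq_same]
    · rw [Pi.single_eq_of_ne hi]
      exact ord.lmo_smul_zero_leB (h i) b

theorem add_remainder {m : ModMon n d} {c : k} (hU : mmVec m ∉ ord.lmSub U)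
    (hh : ∀ i, ¬ dvdV (ord.lmVec (h i)) (mmVec m))
    (hd : ord.IsDivision U h b (f - (monomial 0 c : MvPolynomial (Fin n) k) • mmVec m) p q) :
    ord.IsDivision U h b f (p + (monomial 0 c : MvPolynomial (Fin n) k) • mmVec m) q := by
  refine ⟨?_, fun x hx => ?_, hd.quotient_le⟩
  · convert hd.sub_mem using 1
    abel
  rcases Finset.mem_union.mp (suppF_add_subset _ _ hx) with hx | hx
  · exact hd.remainder x hx
  · have hxm := suppF_monomial_smul_subset 0 c (mmVec m) hx
    rw [suppF_mmVec, Finset.image_singleton, zero_add, Finset.mem_singleton] at hxm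
    exact hxm ▸ ⟨hU, hh⟩

end IsDivision

theorem exists_isDivision (f : FreeMod k n d) :
    ∃ p q, ord.IsDivision U h (ord.lmo f) f p q := by
  induction f using (InvImage.wf ord.lmo ord.wellFounded_leB_ne).induction with
  | _ f ih =>
  rcases eq_or_ne f 0 with rfl | hf
  · exact ⟨0, 0, .zero⟩
  obtain ⟨m, hm⟩ := ord.exists_lmo_eq_coe hf
  have reduce : ∀ (w : FreeMod k n d) (mw : ModMon n d) (β : Fin n →₀ ℕ), ord.lmo w = ↑mw →
      m = (β + mw.1, mw.2) → ∃ c : k, ord.lmo (monomial β c • w) = ↑m ∧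
        ∃ p q, ord.IsDivision U h (ord.lmo f) (f - monomial β c • w) p q := by
    rintro w mw β hw rfl
    obtain ⟨c, hc, hlt⟩ := ord.exists_lmo_sub_monomial_smul_lt hm hw
    obtain ⟨p, q, hd⟩ := ih _ (hm ▸ hlt)
    exact ⟨c, hc, p, q, hd.mono (hm ▸ hlt.1)⟩
  by_cases hU : mmVec m ∈ ord.lmSub U
  · obtain ⟨u, hu, mu, β, hmu, rfl⟩ :=
      ord.exists_lmo_dvd_of_mem_lmSub hU (m := m) (by simp [suppF_mmVec])
    obtain ⟨c, -, p, q, hd⟩ := reduce u mu β hmu rfl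
    exact ⟨p, q, hd.of_sub_mem (U.smul_mem _ hu)⟩
  by_cases hh : ∃ i, dvdV (ord.lmVec (h i)) (mmVec m)
  · obtain ⟨i, hi⟩ := hh
    obtain ⟨mi, β, hmi, rfl⟩ := ord.exists_lmo_eq_of_dvdV_lmVec hi
    obtain ⟨c, hc, p, q, hd⟩ := reduce (h i) mi β hmi rfl
    exact ⟨p, q + Pi.single i _, hd.add_single (by rw [hc, hm]; exact ord.toOrd.le_refl _)⟩
  · simp only [not_exists] at hh
    have hmm : ord.lmo (mmVec m : FreeMod k n d) = ↑m := by
      simp [lmo_eq_coe_iff, suppF_mmVec, leB]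
    obtain ⟨c, -, p, q, hd⟩ := reduce (mmVec m) m 0 hmm (by rw [zero_add])
    exact ⟨_, q, hd.add_remainder hU hh⟩

end ModMonOrder

theorem relative_division_general {k : Type*} [Field k] {n d r : ℕ}
    (ord : ModMonOrder n d)
    (U : Submodule (MvPolynomial (Fin n) k) (FreeMod k n d))
    (G : Finset (FreeMod k n d)) (hG : IsGB ord U G)
    (h : Fin r → FreeMod k n d)
    (f : FreeMod k n d) :
    ∃ (p : FreeMod k n d) (q : Fin r → MvPolynomial (Fin n) k),
      f - p - ∑ i, q i • h i ∈ U ∧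
      (∀ m ∈ suppF p,
        (∀ g ∈ G, ¬ dvdV (ord.lmVec g) (mmVec m)) ∧
        (∀ i, ¬ dvdV (ord.lmVec (h i)) (mmVec m))) ∧
      (∀ i, q i ≠ 0 → ord.leB (ord.lmo (q i • h i)) (ord.lmo f)) := by
  obtain ⟨p, q, hd⟩ := ord.exists_isDivision U h f
  refine ⟨p, q, hd.sub_mem, fun m hm => ⟨fun g hg ⟨c, hc⟩ => ?_, (hd.remainder m hm).2⟩,
    fun i _ => hd.quotient_le i⟩
  have hgU : g ∈ U := hG.1 ▸ Submodule.subset_span hg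
  exact (hd.remainder m hm).1 (hc ▸ (ord.lmSub U).smul_mem c (ord.lmVec_mem_lmSub hgU))

/-- **Relative division algorithm** (output specification). Given a monomial order on `R^d`, a
submodule `U` with Gröbner basis `G`, and a finite set `H = {h_1, …, h_r} ⊆ R^d ∖ {0}` of
elements in normal form with respect to `U`, every `f ∈ R^d` admits a remainder `p` and
quotients `q_1, …, q_r` such that `f - p - ∑ q_i h_i ∈ U`, no module monomial in the support
of `p` is divisible by a leading monomial of an element of `G` or of `H`, and
`lm(q_i h_i) ⪯ lm(f)` whenever `q_i ≠ 0`. -/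
theorem relative_division {k : Type*} [Field k] {n d r : ℕ}
    (ord : ModMonOrder n d)
    (U : Submodule (MvPolynomial (Fin n) k) (FreeMod k n d))
    (G : Finset (FreeMod k n d)) (hG : IsGB ord U G)
    (h : Fin r → FreeMod k n d)
    (hne : ∀ i, h i ≠ 0)
    (hnf : ∀ i, IsNF ord U (h i) (h i))
    (f : FreeMod k n d) :
    ∃ (p : FreeMod k n d) (q : Fin r → MvPolynomial (Fin n) k),
      f - p - ∑ i, q i • h i ∈ U ∧
      (∀ m ∈ suppF p,
        (∀ g ∈ G, ¬ dvdV (ord.lmVec g) (mmVec m)) ∧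
        (∀ i, ¬ dvdV (ord.lmVec (h i)) (mmVec m))) ∧
      (∀ i, q i ≠ 0 → ord.leB (ord.lmo (q i • h i)) (ord.lmo f)) :=
  relative_division_general ord U G hG h f
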